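/- arXiv:2410.07455 — 5 statements merged into one kernel-verified Lean document; each statement's English description precedes it below -/
import Mathlib

section
/- Let H be an r-uniform hypergraph on n vertices with no matching of size s+1, and let v_1,…,v_n be its vertices in decreasing order of degree. Then the degree of v_{s+1} is at most r·s·C(n-2, r-2). -/
open Finset

/-- `H` contains a matching of size `k`, i.e. `k` pairwise disjoint hyperedges. -/
def HasMatching {V : Type*} [DecidableEq V] (H : Finset (Finset V)) (k : ℕ) : Prop :=
  ∃ M : Finset (Finset V), M ⊆ H ∧ M.card = k ∧
    (M : Set (Finset V)).Pairwise fun e f => Disjoint e f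

/-- The degree of a vertex: the number of hyperedges containing it. -/
def degH {V : Type*} [DecidableEq V] (H : Finset (Finset V)) (v : V) : ℕ :=
  (H.filter fun e => v ∈ e).card

/-! Suppose `s + 1` vertices had degree above `r·s·C(n-2, r-2)`. Since two distinct vertices
lie together in at most `C(n-2, r-2)` edges of an `r`-uniform hypergraph, a vertex `v` of such
large degree lies in an edge avoiding any set `W ∌ v` of at most `r·s` vertices. Taking the
large-degree vertices one at a time, and letting `W` consist of the edges already chosen
together with the large-degree vertices still to be treated, we pick `s + 1` pairwise disjoint
edges: a matching of size `s + 1`. -/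

section

variable {V : Type*} [DecidableEq V]

theorem card_filter_superset_le [Fintype V] {H : Finset (Finset V)} {r : ℕ}
    (hunif : ∀ e ∈ H, #e = r) (s : Finset V) :
    #{e ∈ H | s ⊆ e} ≤ (Fintype.card V - #s).choose (r - #s) := by
  calc #{e ∈ H | s ⊆ e}
      ≤ #((powersetCard (r - #s) sᶜ).image (· ∪ s)) := by
        refine card_le_card fun e he ↦ ?_
        rw [mem_filter] at he
        refine mem_image.2 ⟨e \ s, mem_powersetCard.2 ⟨?_, ?_⟩, sdiff_union_of_subset he.2⟩
        · exact fun x hx ↦ mem_compl.2 (mem_sdiff.1 hx).2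
        · rw [card_sdiff_of_subset he.2, hunif e he.1]
    _ ≤ #(powersetCard (r - #s) sᶜ) := card_image_le
    _ = (Fintype.card V - #s).choose (r - #s) := by rw [card_powersetCard, card_compl]

theorem exists_mem_disjoint_of_lt_degH {H : Finset (Finset V)} {D : ℕ}
    (hcodeg : ∀ v w, v ≠ w → #{e ∈ H | {v, w} ⊆ e} ≤ D) {v : V} {W : Finset V} (hv : v ∉ W)
    (hdeg : D * #W < degH H v) : ∃ e ∈ H, v ∈ e ∧ Disjoint e W := by
  have hbad : #{e ∈ H | v ∈ e ∧ ¬Disjoint e W} ≤ D * #W :=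
    calc #{e ∈ H | v ∈ e ∧ ¬Disjoint e W}
        ≤ #(W.biUnion fun w ↦ {e ∈ H | {v, w} ⊆ e}) := by
          refine card_le_card fun e he ↦ ?_
          obtain ⟨heH, hve, hWe⟩ := mem_filter.1 he
          obtain ⟨w, hwe, hwW⟩ := not_disjoint_iff.1 hWe
          exact mem_biUnion.2 ⟨w, hwW, mem_filter.2 ⟨heH, insert_subset hve (by simpa)⟩⟩
      _ ≤ ∑ w ∈ W, #{e ∈ H | {v, w} ⊆ e} := card_biUnion_le
      _ ≤ ∑ _w ∈ W, D := sum_le_sum fun w hw ↦ hcodeg v w (ne_of_mem_of_not_mem hw hv).symm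
      _ = D * #W := by rw [sum_const, smul_eq_mul, mul_comm]
  have hsplit := card_filter_add_card_filter_not (s := H.filter (v ∈ ·)) (Disjoint · W)
  rw [filter_filter, filter_filter, ← degH] at hsplit
  obtain ⟨e, he⟩ := card_pos.1 (show 0 < #{e ∈ H | v ∈ e ∧ Disjoint e W} by omega)
  exact ⟨e, (mem_filter.1 he).1, (mem_filter.1 he).2⟩

theorem hasMatching_filter_disjoint_of_lt_degH {H : Finset (Finset V)} {r D : ℕ}
    (hunif : ∀ e ∈ H, #e ≤ r) (hcodeg : ∀ v w, v ≠ w → #{e ∈ H | {v, w} ⊆ e} ≤ D)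
    (S B : Finset V) (hSB : Disjoint S B) (hdeg : ∀ v ∈ S, D * (#B + r * (#S - 1)) < degH H v) :
    HasMatching {e ∈ H | Disjoint e B} #S := by
  induction S using Finset.induction_on generalizing B with
  | empty => exact ⟨∅, empty_subset _, rfl, by simp⟩
  | insert a T haT ih =>
    rw [card_insert_of_notMem haT, Nat.add_sub_cancel] at hdeg
    rw [disjoint_insert_left] at hSB
    have hr : 0 < r := by
      obtain ⟨e, he⟩ := card_pos.1 (Nat.zero_lt_of_lt (hdeg a (mem_insert_self a T)))
      exact (card_pos.2 ⟨a, (mem_filter.1 he).2⟩).trans_le (hunif e (mem_filter.1 he).1)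
    obtain ⟨e, heH, hae, heBT⟩ : ∃ e ∈ H, a ∈ e ∧ Disjoint e (B ∪ T) := by
      refine exists_mem_disjoint_of_lt_degH hcodeg (by simp [hSB.1, haT]) ?_
      refine (Nat.mul_le_mul_left D ?_).trans_lt (hdeg a (mem_insert_self a T))
      exact (card_union_le B T).trans (Nat.add_le_add_left (Nat.le_mul_of_pos_left _ hr) _)
    rw [disjoint_union_right] at heBT
    -- `e` adds at most `r` vertices to `B` while `T` has one vertex fewer than `insert a T`,
    -- so the bound in `hdeg` does not grow.
    obtain ⟨M, hMH, hMcard, hMdisj⟩ := ih (B ∪ e) (disjoint_union_right.2 ⟨hSB.2, heBT.2.symm⟩)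
      fun v hv ↦ by
        refine (Nat.mul_le_mul_left D ?_).trans_lt (hdeg v (mem_insert_of_mem hv))
        have hT : r * (#T - 1) + r = r * #T := by
          rw [← Nat.mul_succ, Nat.succ_eq_add_one, Nat.sub_add_cancel (card_pos.2 ⟨v, hv⟩)]
        have := (card_union_le B e).trans (Nat.add_le_add_left (hunif e heH) _)
        omega
    have hMe : ∀ f ∈ M, Disjoint f B ∧ Disjoint f e := fun f hf ↦
      disjoint_union_right.1 (mem_filter.1 (hMH hf)).2
    have heM : e ∉ M := fun he ↦ disjoint_left.1 (hMe e he).2 hae hae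
    refine ⟨insert e M, ?_, ?_, ?_⟩
    · refine insert_subset (mem_filter.2 ⟨heH, heBT.1⟩) fun f hf ↦ ?_
      exact mem_filter.2 ⟨(mem_filter.1 (hMH hf)).1, (hMe f hf).1⟩
    · rw [card_insert_of_notMem heM, hMcard, card_insert_of_notMem haT]
    · rw [coe_insert, Set.pairwise_insert_of_symm_of_notMem (mem_coe.not.2 heM)]
      exact ⟨hMdisj, fun f hf ↦ (hMe f hf).2.symm⟩

theorem hasMatching_of_lt_degH {H : Finset (Finset V)} {r D : ℕ}
    (hunif : ∀ e ∈ H, #e ≤ r) (hcodeg : ∀ v w, v ≠ w → #{e ∈ H | {v, w} ⊆ e} ≤ D)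
    (S : Finset V) (hdeg : ∀ v ∈ S, D * (r * (#S - 1)) < degH H v) : HasMatching H #S := by
  have h := hasMatching_filter_disjoint_of_lt_degH hunif hcodeg S ∅ (disjoint_empty_right S)
    (by simpa using hdeg)
  rwa [filter_true_of_mem fun e _ ↦ disjoint_empty_right e] at h

end

theorem stmt_2_general (r s n : ℕ) (H : Finset (Finset (Fin n)))
    (hunif : ∀ e ∈ H, e.card = r) (hM : ¬ HasMatching H (s + 1)) :
    (Finset.univ.filter fun v : Fin n =>
      r * s * Nat.choose (n - 2) (r - 2) < degH H v).card ≤ s := by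
  by_contra! hlarge
  obtain ⟨S, hS, hScard⟩ := exists_subset_card_eq (show s + 1 ≤ _ from hlarge)
  have hcodeg (v w : Fin n) (hvw : v ≠ w) : #{e ∈ H | {v, w} ⊆ e} ≤ (n - 2).choose (r - 2) := by
    simpa [card_pair hvw] using card_filter_superset_le hunif {v, w}
  refine hM (hScard ▸ hasMatching_of_lt_degH (fun e he ↦ (hunif e he).le) hcodeg S
    fun v hv ↦ ?_)
  rw [hScard, Nat.add_sub_cancel, mul_comm]
  exact (mem_filter.1 (hS hv)).2

/-- In an `r`-uniform hypergraph on `n` vertices with no matching of size `s+1`,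
the `(s+1)`-st largest degree is at most `r·s·C(n-2, r-2)`; equivalently, at most `s`
vertices have degree exceeding this bound. -/
theorem stmt_2 (r s n : ℕ) (hn : (s + 2) * r + s ≤ n) (H : Finset (Finset (Fin n)))
    (hunif : ∀ e ∈ H, e.card = r) (hM : ¬ HasMatching H (s + 1)) :
    (Finset.univ.filter fun v : Fin n =>
      r * s * Nat.choose (n - 2) (r - 2) < degH H v).card ≤ s :=
  stmt_2_general r s n H hunif hM
end

section
/- Let F be an r-uniform hypergraph with χ(F) > 2, let 𝓕 be the family of r-graphs obtained from F by deleting a weakly independent set, and let H_0 be an s-vertex 𝓕-free r-graph. Form H on n vertices by adding n−s new vertices to H_0 and adding every r-set that contains at least one and at most r−1 vertices of V(H_0). Then H contains no matching of size s+1 and no copy of F. -/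
open Finset

/-- `W` is a weakly independent vertex set of `F`: it contains no hyperedge of `F`. -/
def WeaklyIndep {α : Type*} [DecidableEq α] (F : Finset (Finset α)) (W : Finset α) : Prop :=
  ∀ e ∈ F, ¬ e ⊆ W

/-- `H` contains a copy of the hypergraph obtained from `F` by deleting the vertex set `W`.
(Taking `W = ∅` this says `H` contains a copy of `F` itself.) -/
def ContainsDeleted {α V : Type*} [Fintype α] [DecidableEq α] [DecidableEq V]
    (F : Finset (Finset α)) (W : Finset α) (H : Finset (Finset V)) : Prop :=
  ∃ f : α → V, Set.InjOn f ↑(Finset.univ \ W) ∧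
    ∀ e ∈ F, Disjoint e W → e.image f ∈ H

/-- Construction for the lower bound of Theorem 1.4:  take an `𝓕`-free `r`-graph `H₀` on `s`
vertices, add `n - s` new vertices, and add every `r`-set containing at least one and at
most `r-1` vertices of `H₀`.  The result has no matching of size `s+1` and no copy of `F`. -/
theorem stmt_5 {α : Type*} [Fintype α] [DecidableEq α] (r s m : ℕ) (hr : 1 ≤ r)
    (F : Finset (Finset α)) (hF : ∀ e ∈ F, e.card = r)
    (hchrom : ¬ ∃ c : α → Fin 2, ∀ e ∈ F, ∃ u ∈ e, ∃ v ∈ e, c u ≠ c v)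
    (H0 : Finset (Finset (Fin s))) (hH0unif : ∀ e ∈ H0, e.card = r)
    (hH0free : ∀ W : Finset α, WeaklyIndep F W → ¬ ContainsDeleted F W H0) :
    ¬ HasMatching
      (H0.image (Finset.image Sum.inl) ∪
        (Finset.univ.powersetCard r).filter (fun e : Finset (Fin s ⊕ Fin m) =>
          1 ≤ (e.filter fun v => v.isLeft = true).card ∧
          (e.filter fun v => v.isLeft = true).card ≤ r - 1)) (s + 1) ∧
    ¬ ContainsDeleted F ∅
      (H0.image (Finset.image Sum.inl) ∪
        (Finset.univ.powersetCard r).filter (fun e : Finset (Fin s ⊕ Fin m) =>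
          1 ≤ (e.filter fun v => v.isLeft = true).card ∧
          (e.filter fun v => v.isLeft = true).card ≤ r - 1)) := by
  classical
  constructor
  · rintro ⟨M, hMH, hMcard, hMdisj⟩
    have hleft : ∀ e ∈ M, ∃ x : Fin s, Sum.inl x ∈ e := by
      intro e heM
      rcases Finset.mem_union.1 (hMH heM) with h | h
      · rcases Finset.mem_image.1 h with ⟨e0, he0, rfl⟩
        obtain ⟨x, hx⟩ : e0.Nonempty := Finset.card_pos.1 (by rw [hH0unif e0 he0]; omega)
        exact ⟨x, Finset.mem_image_of_mem _ hx⟩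
      · have h1 := (Finset.mem_filter.1 h).2.1
        obtain ⟨v, hv⟩ : (e.filter fun v => v.isLeft = true).Nonempty :=
          Finset.card_pos.1 (by omega)
        rcases Finset.mem_filter.1 hv with ⟨hve, hvl⟩
        rcases v with x | x
        · exact ⟨x, hve⟩
        · simp at hvl
    choose g hg using hleft
    have inj : Function.Injective (fun p : {e // e ∈ M} => g p.1 p.2) := by
      rintro ⟨a, ha⟩ ⟨b, hb⟩ hab
      simp only at hab
      by_cases hab' : a = b
      · exact Subtype.ext hab'
      · exfalso
        have hd := hMdisj (Finset.mem_coe.2 ha) (Finset.mem_coe.2 hb) hab'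
        exact Finset.disjoint_left.1 hd (hg a ha) (by rw [hab]; exact hg b hb)
    have hle := Fintype.card_le_of_injective _ inj
    simp [Fintype.card_coe, hMcard] at hle
  · rintro ⟨f, finj, hmap⟩
    have finj' : Set.InjOn f Set.univ := by simpa using finj
    have hmap' : ∀ e ∈ F, e.image f ∈
        (H0.image (Finset.image Sum.inl) ∪
          (Finset.univ.powersetCard r).filter (fun e : Finset (Fin s ⊕ Fin m) =>
            1 ≤ (e.filter fun v => v.isLeft = true).card ∧
            (e.filter fun v => v.isLeft = true).card ≤ r - 1)) :=
      fun e he => hmap e he (Finset.disjoint_empty_right _)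
    set W : Finset α := univ.filter (fun u => (f u).isRight = true) with hW
    have hnoright : ∀ e ∈ F, ¬ e ⊆ W := by
      intro e he hsub
      obtain ⟨u, hu⟩ : e.Nonempty := Finset.card_pos.1 (by rw [hF e he]; omega)
      have hall : ∀ v ∈ e.image f, v.isRight = true := by
        intro v hv
        rcases Finset.mem_image.1 hv with ⟨w, hw, rfl⟩
        exact (Finset.mem_filter.1 (hsub hw)).2
      rcases Finset.mem_union.1 (hmap' e he) with h | h
      · rcases Finset.mem_image.1 h with ⟨e0, he0, heq⟩
        have hmem : f u ∈ e0.image Sum.inl := by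
          rw [heq]; exact Finset.mem_image_of_mem _ hu
        rcases Finset.mem_image.1 hmem with ⟨x, hx, hfx⟩
        have := hall (f u) (Finset.mem_image_of_mem _ hu)
        rw [← hfx] at this
        simp at this
      · have h1 := (Finset.mem_filter.1 h).2.1
        have hemp : (e.image f).filter (fun v => v.isLeft = true) = ∅ := by
          apply Finset.filter_eq_empty_iff.2
          intro v hv
          have := hall v hv
          cases v <;> simp_all
        rw [hemp] at h1; simp at h1
    have hFne : F.Nonempty := by
      rcases Finset.eq_empty_or_nonempty F with h | h
      · exact absurd ⟨fun _ => 0, fun e he => absurd he (by simp [h])⟩ hchrom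
      · exact h
    obtain ⟨e₀, he₀⟩ := hFne
    obtain ⟨u₀, hu₀e, hu₀W⟩ : ∃ u ∈ e₀, u ∉ W := by
      by_contra hc
      push_neg at hc
      exact hnoright e₀ he₀ hc
    obtain ⟨x₀, hx₀⟩ : ∃ x, f u₀ = Sum.inl x := by
      have : ¬ (f u₀).isRight = true := by
        intro h
        exact hu₀W (Finset.mem_filter.2 ⟨Finset.mem_univ _, h⟩)
      cases h : f u₀
      · exact ⟨_, rfl⟩
      · rw [h] at this; simp at this
    set g : α → Fin s := fun u => Sum.elim id (fun _ => x₀) (f u) with hg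
    have key : ∀ u, u ∉ W → f u = Sum.inl (g u) := by
      intro u hu
      have hr' : ¬ (f u).isRight = true := by
        intro h
        exact hu (Finset.mem_filter.2 ⟨Finset.mem_univ _, h⟩)
      cases h : f u with
      | inl x => simp [hg, h]
      | inr y => rw [h] at hr'; simp at hr'
    refine hH0free W hnoright ⟨g, ?_, ?_⟩
    · intro u hu v hv huv
      simp only [Finset.coe_sdiff, Set.mem_diff, Finset.mem_coe] at hu hv
      have h1 := key u hu.2
      have h2 := key v hv.2
      apply finj' (Set.mem_univ u) (Set.mem_univ v)
      rw [h1, h2, huv]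
    · intro e he hdisj
      have hnW : ∀ u ∈ e, u ∉ W := fun u hu => Finset.disjoint_left.1 hdisj hu
      have himg : e.image f = (e.image g).image Sum.inl := by
        rw [Finset.image_image]
        exact Finset.image_congr fun u hu => key u (hnW u hu)
      rcases Finset.mem_union.1 (hmap' e he) with h | h
      · rcases Finset.mem_image.1 h with ⟨e0, he0, heq⟩
        have : e.image g = e0 := by
          apply Finset.image_injective (f := (Sum.inl : Fin s → Fin s ⊕ Fin m)) Sum.inl_injective
          rw [← himg, heq]
        rwa [this]
      · exfalso
        have h2 := (Finset.mem_filter.1 h).2.2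
        have hself : (e.image f).filter (fun v => v.isLeft = true) = e.image f := by
          apply Finset.filter_eq_self.2
          intro v hv
          rcases Finset.mem_image.1 hv with ⟨u, hu, rfl⟩
          rw [key u (hnW u hu)]; rfl
        rw [hself] at h2
        have hcard : (e.image f).card = r := by
          rw [Finset.card_image_of_injOn (finj'.mono (Set.subset_univ _)), hF e he]
        omega
end

section
/- If an r-uniform hypergraph F has no vertex contained in every hyperedge, then ex_r(n, {F, M_{s+1}^r}) = Θ(n^{r-1}), i.e., there exist positive constants c_1, c_2 such that for all large n, c_1·n^{r-1} ≤ ex_r(n, {F, M_{s+1}^r}) ≤ c_2·n^{r-1}. -/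
open Finset

/-- `H` contains a copy of `F`: an injective vertex map sending hyperedges to hyperedges. -/
def ContainsCopy {α V : Type*} [DecidableEq α] [DecidableEq V]
    (F : Finset (Finset α)) (H : Finset (Finset V)) : Prop :=
  ∃ f : α → V, Function.Injective f ∧ ∀ e ∈ F, e.image f ∈ H

/-- `ex_r(n, {F, M_{s+1}^r})`: the maximum number of hyperedges of an `n`-vertex
`r`-uniform hypergraph with no copy of `F` and no matching of size `s+1`. -/
noncomputable def exFM {α : Type*} [DecidableEq α]
    (F : Finset (Finset α)) (r s n : ℕ) : ℕ :=
  sSup {m | ∃ H : Finset (Finset (Fin n)), (∀ e ∈ H, e.card = r) ∧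
    ¬ ContainsCopy F H ∧ ¬ HasMatching H (s + 1) ∧ H.card = m}

/-!
Upper bound: a maximum matching of an `r`-graph without `s + 1` disjoint edges has at most `s`
edges, so its vertex set `S` has at most `s r` vertices and meets every edge (by maximality).
Each vertex lies in at most `C(n-1, r-1)` edges, hence there are at most `s r C(n-1, r-1)` edges.

Lower bound: the full star at a vertex `v` has `C(n-1, r-1)` edges, no two of them disjoint.
It contains no copy of `F`, since the preimage of `v` would be a vertex of `F` in every edge.
-/

section Hypergraph

variable {V : Type*} [DecidableEq V] {H : Finset (Finset V)}

theorem HasMatching.mono {k l : ℕ} (h : HasMatching H k) (hlk : l ≤ k) : HasMatching H l := by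
  obtain ⟨M, hMH, rfl, hM⟩ := h
  obtain ⟨M', hM'M, rfl⟩ := exists_subset_card_eq hlk
  exact ⟨M', hM'M.trans hMH, rfl, hM.mono (coe_subset.mpr hM'M)⟩

theorem exists_transversal_of_not_hasMatching {r s : ℕ} (hne : ∀ e ∈ H, e.Nonempty)
    (hcard : ∀ e ∈ H, #e ≤ r) (h : ¬ HasMatching H (s + 1)) :
    ∃ S : Finset V, #S ≤ s * r ∧ ∀ e ∈ H, ∃ v ∈ S, v ∈ e := by
  classical
  let matchings := H.powerset.filter fun M : Finset (Finset V) =>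
    (M : Set (Finset V)).Pairwise fun e f => Disjoint e f
  obtain ⟨M, hM, hMmax⟩ := matchings.exists_max_image card ⟨∅, by simp [matchings]⟩
  obtain ⟨hMH, hMdisj⟩ : M ⊆ H ∧ (M : Set (Finset V)).Pairwise fun e f => Disjoint e f := by
    simpa [matchings] using hM
  have hMcard : #M ≤ s := by
    by_contra! hlt
    exact h (HasMatching.mono ⟨M, hMH, rfl, hMdisj⟩ hlt)
  refine ⟨M.biUnion id, ?_, fun e he => ?_⟩
  · calc #(M.biUnion id) ≤ ∑ e ∈ M, #e := card_biUnion_le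
      _ ≤ ∑ _e ∈ M, r := sum_le_sum fun e he => hcard e (hMH he)
      _ = #M * r := by rw [sum_const, smul_eq_mul]
      _ ≤ s * r := Nat.mul_le_mul_right r hMcard
  by_contra! hmiss
  have heM : e ∉ M := fun heM => by
    obtain ⟨v, hv⟩ := hne e he
    exact hmiss v (mem_biUnion.mpr ⟨e, heM, hv⟩) hv
  have hdisj : ∀ f ∈ M, e ≠ f → Disjoint e f := fun f hf _ =>
    disjoint_left.mpr fun v hve hvf => hmiss v (mem_biUnion.mpr ⟨f, hf, hvf⟩) hve
  have hins : insert e M ∈ matchings := by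
    simpa [matchings, insert_subset_iff, he, hMH] using hMdisj.insert_of_symm hdisj
  have := hMmax _ hins
  rw [card_insert_of_notMem heM] at this
  omega

theorem card_le_card_mul_of_forall_degree_le {S : Finset V} {d : ℕ}
    (hS : ∀ e ∈ H, ∃ v ∈ S, v ∈ e) (hdeg : ∀ v ∈ S, #{e ∈ H | v ∈ e} ≤ d) :
    #H ≤ #S * d := by
  refine le_trans (card_le_card fun e he => ?_) (card_biUnion_le_card_mul S _ d hdeg)
  obtain ⟨v, hvS, hve⟩ := hS e he
  exact mem_biUnion.mpr ⟨v, hvS, mem_filter.mpr ⟨he, hve⟩⟩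

theorem not_hasMatching_of_forall_mem {v : V} (hv : ∀ e ∈ H, v ∈ e) {k : ℕ} (hk : 2 ≤ k) :
    ¬ HasMatching H k := by
  rintro ⟨M, hMH, hMcard, hMdisj⟩
  obtain ⟨a, ha, b, hb, hab⟩ := one_lt_card.mp (show 1 < #M by omega)
  exact disjoint_left.mp (hMdisj ha hb hab) (hv a (hMH ha)) (hv b (hMH hb))

theorem not_containsCopy_of_forall_mem {α : Type*} [DecidableEq α] {F : Finset (Finset α)}
    (hFne : F.Nonempty) (hcover : ∀ u : α, ∃ e ∈ F, u ∉ e) {v : V}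
    (hv : ∀ e ∈ H, v ∈ e) :
    ¬ ContainsCopy F H := by
  rintro ⟨f, hfinj, hf⟩
  obtain ⟨e₀, he₀⟩ := hFne
  obtain ⟨u, -, hu⟩ := mem_image.mp (hv _ (hf e₀ he₀))
  obtain ⟨e, heF, hue⟩ := hcover u
  obtain ⟨u', hu'e, hu'⟩ := mem_image.mp (hv _ (hf e heF))
  exact hue (hfinj (hu'.trans hu.symm) ▸ hu'e)

variable [Fintype V] {r : ℕ}

theorem card_filter_mem_le_choose (hH : ∀ e ∈ H, #e = r) (v : V) :
    #{e ∈ H | v ∈ e} ≤ (Fintype.card V - 1).choose (r - 1) := by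
  have hmaps : Set.MapsTo (fun e : Finset V => e.erase v) ↑{e ∈ H | v ∈ e}
      ↑((univ.erase v).powersetCard (r - 1)) := by
    intro e he
    rw [mem_coe, mem_filter] at he
    rw [mem_coe, mem_powersetCard, card_erase_of_mem he.2, hH e he.1]
    exact ⟨erase_subset_erase v (subset_univ e), rfl⟩
  have hinj : Set.InjOn (fun e : Finset V => e.erase v) ↑{e ∈ H | v ∈ e} := by
    intro e₁ h₁ e₂ h₂ h
    rw [mem_coe, mem_filter] at h₁ h₂
    rw [← insert_erase h₁.2, ← insert_erase h₂.2]
    exact congrArg (insert v) h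
  simpa [card_powersetCard] using card_le_card_of_injOn _ hmaps hinj

theorem card_le_of_not_hasMatching {s : ℕ} (hr : 1 ≤ r) (hH : ∀ e ∈ H, #e = r)
    (h : ¬ HasMatching H (s + 1)) : #H ≤ s * r * (Fintype.card V - 1).choose (r - 1) := by
  obtain ⟨S, hS, hcover⟩ := exists_transversal_of_not_hasMatching
    (fun e he => card_pos.mp (by rw [hH e he]; omega)) (fun e he => (hH e he).le) h
  calc #H ≤ #S * (Fintype.card V - 1).choose (r - 1) :=
        card_le_card_mul_of_forall_degree_le hcover fun v _ => card_filter_mem_le_choose hH v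
    _ ≤ s * r * (Fintype.card V - 1).choose (r - 1) := Nat.mul_le_mul_right _ hS

def fullStar (v : V) (r : ℕ) : Finset (Finset V) :=
  ((univ.erase v).powersetCard (r - 1)).image (insert v)

theorem mem_of_mem_fullStar {v : V} {e : Finset V} (he : e ∈ fullStar v r) : v ∈ e := by
  obtain ⟨t, -, rfl⟩ := mem_image.mp he
  exact mem_insert_self v t

theorem card_of_mem_fullStar (hr : 1 ≤ r) {v : V} {e : Finset V} (he : e ∈ fullStar v r) :
    #e = r := by
  obtain ⟨t, ht, rfl⟩ := mem_image.mp he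
  rw [mem_powersetCard, subset_erase] at ht
  rw [card_insert_of_notMem ht.1.2, ht.2]
  omega

theorem card_fullStar (v : V) (r : ℕ) :
    #(fullStar v r) = (Fintype.card V - 1).choose (r - 1) := by
  rw [fullStar, card_image_of_injOn, card_powersetCard, card_erase_of_mem (mem_univ v), card_univ]
  intro t₁ h₁ t₂ h₂ h
  rw [mem_coe, mem_powersetCard, subset_erase] at h₁ h₂
  rw [← erase_insert h₁.1.2, ← erase_insert h₂.1.2]
  exact congrArg (fun e : Finset V => e.erase v) h

end Hypergraph

section Extremal

variable {α : Type*} [DecidableEq α] {F : Finset (Finset α)} {r s n : ℕ}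

theorem exFM_le_choose (hr : 1 ≤ r) : exFM F r s n ≤ s * r * (n - 1).choose (r - 1) := by
  refine csSup_le' ?_
  rintro m ⟨H, hH, -, hmatch, rfl⟩
  simpa using card_le_of_not_hasMatching hr hH hmatch

theorem choose_le_exFM (hr : 1 ≤ r) (hs : 1 ≤ s) (hn : 0 < n) (hFne : F.Nonempty)
    (hcover : ∀ u : α, ∃ e ∈ F, u ∉ e) : (n - 1).choose (r - 1) ≤ exFM F r s n := by
  have hbdd : BddAbove {m | ∃ H : Finset (Finset (Fin n)), (∀ e ∈ H, #e = r) ∧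
      ¬ ContainsCopy F H ∧ ¬ HasMatching H (s + 1) ∧ #H = m} :=
    ⟨_, by rintro m ⟨H, -, -, -, rfl⟩; exact card_le_univ H⟩
  have hv : ∀ e ∈ fullStar (⟨0, hn⟩ : Fin n) r, ⟨0, hn⟩ ∈ e :=
    fun e => mem_of_mem_fullStar
  refine le_csSup hbdd ⟨_, fun e => card_of_mem_fullStar hr, not_containsCopy_of_forall_mem hFne
    hcover hv, not_hasMatching_of_forall_mem hv (by omega), by simp [card_fullStar]⟩

end Extremal

theorem pow_le_two_pow_mul_factorial_mul_choose {n k : ℕ} (h : 2 * k < n) :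
    n ^ k ≤ 2 ^ k * k.factorial * (n - 1).choose k := by
  have hdesc : (n - k) ^ k ≤ k.factorial * (n - 1).choose k := by
    rw [← Nat.descFactorial_eq_factorial_mul_choose]
    convert Nat.pow_sub_le_descFactorial (n - 1) k using 2
    omega
  calc n ^ k ≤ (2 * (n - k)) ^ k := Nat.pow_le_pow_left (by omega) k
    _ = 2 ^ k * (n - k) ^ k := mul_pow _ _ _
    _ ≤ 2 ^ k * k.factorial * (n - 1).choose k := by
      rw [mul_assoc]; exact Nat.mul_le_mul_left _ hdesc

theorem stmt_6_general {α : Type*} [DecidableEq α] (r s : ℕ) (hr : 1 ≤ r) (hs : 1 ≤ s)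
    (F : Finset (Finset α)) (hFne : F.Nonempty)
    (hcover : ∀ v : α, ∃ e ∈ F, v ∉ e) :
    ∃ c₁ c₂ : ℝ, 0 < c₁ ∧ 0 < c₂ ∧ ∃ n0 : ℕ, ∀ n ≥ n0,
      c₁ * (n : ℝ) ^ (r - 1) ≤ (exFM F r s n : ℝ) ∧
      (exFM F r s n : ℝ) ≤ c₂ * (n : ℝ) ^ (r - 1) := by
  have hsr : (0 : ℝ) < s * r := by exact_mod_cast Nat.mul_pos hs hr
  refine ⟨((2 ^ (r - 1) * (r - 1).factorial : ℕ) : ℝ)⁻¹, s * r, by positivity, hsr, 2 * r,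
    fun n hn => ⟨?_, ?_⟩⟩
  · rw [inv_mul_le_iff₀ (by positivity)]
    exact_mod_cast (pow_le_two_pow_mul_factorial_mul_choose (by omega)).trans
      (Nat.mul_le_mul_left _ (choose_le_exFM hr hs (by omega) hFne hcover))
  · have hchoose : (n - 1).choose (r - 1) ≤ n ^ (r - 1) :=
      (Nat.choose_le_pow _ _).trans (Nat.pow_le_pow_left (n.sub_le 1) _)
    exact_mod_cast (exFM_le_choose hr).trans (Nat.mul_le_mul_left (s * r) hchoose)

/-- If no vertex of `F` lies in every hyperedge, then
`ex_r(n, {F, M_{s+1}^r}) = Θ(n^{r-1})`. -/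
theorem stmt_6 {α : Type*} [Fintype α] [DecidableEq α] (r s : ℕ) (hr : 1 ≤ r) (hs : 1 ≤ s)
    (F : Finset (Finset α)) (hFne : F.Nonempty) (hF : ∀ e ∈ F, e.card = r)
    (hcover : ∀ v : α, ∃ e ∈ F, v ∉ e) :
    ∃ c₁ c₂ : ℝ, 0 < c₁ ∧ 0 < c₂ ∧ ∃ n0 : ℕ, ∀ n ≥ n0,
      c₁ * (n : ℝ) ^ (r - 1) ≤ (exFM F r s n : ℝ) ∧
      (exFM F r s n : ℝ) ≤ c₂ * (n : ℝ) ^ (r - 1) :=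
  stmt_6_general r s hr hs F hFne hcover
end

section
/- Let F be a 2-chromatic r-uniform hypergraph with q(F) > s, where q(F) is the minimum number of red vertices over all strong red-blue colorings of F (q(F)=∞ if none exists). Then the r-graph H with vertex set A ∪ B, |A| = s, |B| = n − s, whose hyperedges are all r-sets containing exactly one vertex of A, contains no copy of F and no matching of size s+1, and has s·C(n−s, r−1) hyperedges. -/
open Finset

/-- A proper red-blue coloring of `F` (`true` = red): no hyperedge is monochromatic. -/
def ProperRB {α : Type*} (F : Finset (Finset α)) (c : α → Bool) : Prop :=
  ∀ e ∈ F, ∃ u ∈ e, ∃ v ∈ e, c u ≠ c v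

/-- A strong red-blue coloring: a proper red-blue coloring in which every hyperedge
contains exactly one red vertex. -/
def StrongRB {α : Type*} [DecidableEq α] (F : Finset (Finset α)) (c : α → Bool) : Prop :=
  ProperRB F c ∧ ∀ e ∈ F, (e.filter fun v => c v = true).card = 1

/-!
Color the host graph by "red = vertex of `A`", so that each of its edges has exactly one red
vertex. Along a copy of `F` this pulls back to a coloring of `F` with exactly one red vertex per
edge and at most `|A| = s` red vertices in all; it is proper, hence strong, since every edge of
the 2-colorable `F` has at least two vertices. This contradicts `q(F) > s`. The edges of a
matching have pairwise distinct red vertices, so there are at most `s` of them. Finally, an edge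
is a choice of one vertex of `A` together with `r - 1` vertices of `B`.
-/

section

variable {α V : Type*}

lemma ProperRB.one_lt_card {F : Finset (Finset α)} {c : α → Bool} (hc : ProperRB F c)
    {e : Finset α} (he : e ∈ F) : 1 < #e := by
  obtain ⟨u, hu, v, hv, huv⟩ := hc e he
  exact Finset.one_lt_card.2 ⟨u, hu, v, hv, fun h => huv (h ▸ rfl)⟩

lemma ProperRB.of_card_filter_eq_one {F : Finset (Finset α)} {c : α → Bool}
    (hcard : ∀ e ∈ F, 1 < #e) (hred : ∀ e ∈ F, #(e.filter fun v => c v = true) = 1) :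
    ProperRB F c := by
  intro e he
  obtain ⟨u, hu⟩ := card_eq_one.1 (hred e he)
  have hu' : u ∈ e ∧ c u = true := mem_filter.1 (hu ▸ mem_singleton_self u)
  obtain ⟨v, hv, hvu⟩ := exists_mem_ne (hcard e he) u
  have hv_blue : c v ≠ true := fun hv' => hvu <| mem_singleton.1 (hu ▸ mem_filter.2 ⟨hv, hv'⟩)
  exact ⟨u, hu'.1, v, hv, hu'.2 ▸ hv_blue.symm⟩

lemma HasMatching.le_card_filter [DecidableEq V] [Fintype V] {H : Finset (Finset V)} {m : ℕ}
    (col : V → Bool)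
    (hH : ∀ e ∈ H, #(e.filter fun v => col v = true) = 1) (hM : HasMatching H m) :
    m ≤ #(univ.filter fun v => col v = true) := by
  obtain ⟨M, hMH, rfl, hMdisj⟩ := hM
  have hdisj : (M : Set (Finset V)).PairwiseDisjoint fun e => e.filter fun v => col v = true :=
    fun e he f hf hef => (hMdisj he hf hef).mono (filter_subset _ _) (filter_subset _ _)
  calc #M = ∑ e ∈ M, #(e.filter fun v => col v = true) := by
        rw [sum_congr rfl fun e he => hH e (hMH he), sum_const, smul_eq_mul, mul_one]
    _ = #(M.biUnion fun e => e.filter fun v => col v = true) := (card_biUnion hdisj).symm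
    _ ≤ #(univ.filter fun v => col v = true) :=
        card_le_card <| biUnion_subset.2 fun e _ => filter_subset_filter _ (subset_univ e)

lemma ContainsCopy.exists_strongRB [DecidableEq α] [DecidableEq V] [Fintype α] [Fintype V]
    {F : Finset (Finset α)} {H : Finset (Finset V)} (col : V → Bool)
    (hH : ∀ e ∈ H, #(e.filter fun v => col v = true) = 1) (hF : ∃ c, ProperRB F c)
    (hcopy : ContainsCopy F H) :
    ∃ c : α → Bool, StrongRB F c ∧
      #(univ.filter fun a => c a = true) ≤ #(univ.filter fun v => col v = true) := by
  obtain ⟨f, hf, hfH⟩ := hcopy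
  obtain ⟨c₀, hc₀⟩ := hF
  have hred : ∀ e ∈ F, #(e.filter fun a => col (f a) = true) = 1 := fun e he => by
    rw [← card_image_of_injective _ hf, ← filter_image (p := fun v => col v = true)]
    exact hH _ (hfH e he)
  refine ⟨col ∘ f, ⟨.of_card_filter_eq_one (fun e he => hc₀.one_lt_card he) hred, hred⟩, ?_⟩
  exact card_le_card_of_injOn f (fun a ha => by simpa using ha) hf.injOn

end

lemma card_filter_isLeft {X Y : Type*} (u : Finset (X ⊕ Y)) :
    #(u.filter fun v => v.isLeft = true) = #u.toLeft := by
  rw [← u.toLeft.card_map ⟨Sum.inl, Sum.inl_injective⟩]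
  congr 1
  ext (x | x) <;> simp

lemma card_powersetCard_filter_card_toLeft {X Y : Type*} [Fintype X] [Fintype Y]
    [DecidableEq X] [DecidableEq Y] {k r : ℕ} (hkr : k ≤ r) :
    #((univ.powersetCard r).filter fun u : Finset (X ⊕ Y) => #u.toLeft = k)
      = (Fintype.card X).choose k * (Fintype.card Y).choose (r - k) := by
  rw [← card_univ (α := X), ← card_univ (α := Y), ← card_powersetCard, ← card_powersetCard,
    ← card_product]
  refine card_nbij' (fun u => (u.toLeft, u.toRight)) (fun p => p.1.disjSum p.2) ?_ ?_
    (fun u _ => toLeft_disjSum_toRight) (fun p _ => by simp)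
  · intro u hu
    simp only [coe_filter, mem_powersetCard_univ, Set.mem_ofPred_eq] at hu
    have := u.card_toLeft_add_card_toRight
    simp only [coe_product, Set.mem_prod, mem_coe, mem_powersetCard_univ]
    omega
  · intro p hp
    simp only [coe_product, Set.mem_prod, mem_coe, mem_powersetCard_univ] at hp
    simp only [coe_filter, mem_powersetCard_univ, Set.mem_ofPred_eq, card_disjSum, toLeft_disjSum]
    omega

theorem stmt_10_general {α : Type*} [Fintype α] [DecidableEq α] (r s n : ℕ)
    (F : Finset (Finset α)) (hF : ∀ e ∈ F, e.card = r)
    (hchrom2 : (∃ c : α → Bool, ProperRB F c) ∧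
      ¬ ∃ c : α → Fin 1, ∀ e ∈ F, ∃ u ∈ e, ∃ v ∈ e, c u ≠ c v)
    (hq : ∀ c : α → Bool, StrongRB F c → s < (Finset.univ.filter fun x => c x = true).card) :
    ¬ ContainsCopy F
      ((Finset.univ.powersetCard r).filter (fun e : Finset (Fin s ⊕ Fin (n - s)) =>
        (e.filter fun v => v.isLeft = true).card = 1)) ∧
    ¬ HasMatching
      ((Finset.univ.powersetCard r).filter (fun e : Finset (Fin s ⊕ Fin (n - s)) =>
        (e.filter fun v => v.isLeft = true).card = 1)) (s + 1) ∧
    ((Finset.univ.powersetCard r).filter (fun e : Finset (Fin s ⊕ Fin (n - s)) =>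
        (e.filter fun v => v.isLeft = true).card = 1)).card
      = s * Nat.choose (n - s) (r - 1) := by
  set H := (univ.powersetCard r).filter fun e : Finset (Fin s ⊕ Fin (n - s)) =>
    #(e.filter fun v => v.isLeft = true) = 1
  have hH : ∀ e ∈ H, #(e.filter fun v => v.isLeft = true) = 1 := fun e he => (mem_filter.1 he).2
  have hA : #(univ.filter fun v : Fin s ⊕ Fin (n - s) => v.isLeft = true) = s := by
    rw [card_filter_isLeft, toLeft_univ, card_univ, Fintype.card_fin]
  -- `r - 1` truncates at `r = 0`, where the count would fail.
  have hr : 1 ≤ r := by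
    obtain ⟨e, he⟩ : F.Nonempty :=
      nonempty_iff_ne_empty.2 fun hempty => hchrom2.2 ⟨fun _ => 0, by simp [hempty]⟩
    obtain ⟨c₀, hc₀⟩ := hchrom2.1
    exact hF e he ▸ (hc₀.one_lt_card he).le
  refine ⟨fun hcopy => ?_, fun hM => ?_, ?_⟩
  · obtain ⟨c, hc, hle⟩ := hcopy.exists_strongRB Sum.isLeft hH hchrom2.1
    exact (hq c hc).not_ge (hle.trans_eq hA)
  · have := hM.le_card_filter Sum.isLeft hH
    omega
  · simp_rw [H, card_filter_isLeft]
    rw [card_powersetCard_filter_card_toLeft hr, Fintype.card_fin, Fintype.card_fin,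
      Nat.choose_one_right]

/-- Let `F` be a 2-chromatic `r`-graph with `q(F) > s` (every strong red-blue coloring has
more than `s` red vertices).  Taking `A` of size `s` and `B` of size `n - s`, the `r`-graph
of all `r`-sets with exactly one vertex in `A` has no copy of `F`, no matching of size
`s+1`, and exactly `s·C(n-s, r-1)` hyperedges. -/
theorem stmt_10 {α : Type*} [Fintype α] [DecidableEq α] (r s n : ℕ) (hsn : s ≤ n)
    (F : Finset (Finset α)) (hF : ∀ e ∈ F, e.card = r)
    (hchrom2 : (∃ c : α → Bool, ProperRB F c) ∧
      ¬ ∃ c : α → Fin 1, ∀ e ∈ F, ∃ u ∈ e, ∃ v ∈ e, c u ≠ c v)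
    (hq : ∀ c : α → Bool, StrongRB F c → s < (Finset.univ.filter fun x => c x = true).card) :
    ¬ ContainsCopy F
      ((Finset.univ.powersetCard r).filter (fun e : Finset (Fin s ⊕ Fin (n - s)) =>
        (e.filter fun v => v.isLeft = true).card = 1)) ∧
    ¬ HasMatching
      ((Finset.univ.powersetCard r).filter (fun e : Finset (Fin s ⊕ Fin (n - s)) =>
        (e.filter fun v => v.isLeft = true).card = 1)) (s + 1) ∧
    ((Finset.univ.powersetCard r).filter (fun e : Finset (Fin s ⊕ Fin (n - s)) =>
        (e.filter fun v => v.isLeft = true).card = 1)).card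
      = s * Nat.choose (n - s) (r - 1) :=
  stmt_10_general r s n F hF hchrom2 hq
end

section
/- Let G be a graph, and let m(G) be the minimum of |W| + |Z| over all pairs (W, Z), where W is an independent set of vertices in G and Z is the set of edges of G not incident to W. Consider the r-graph 𝒢₁ on A ∪ C with |A| = m(G) − 1, |C| = n − m(G) + 1, whose hyperedges are all r-sets containing exactly one vertex of A and r−1 vertices of C. Then 𝒢₁ contains no copy of the r-expansion G^r. -/
open Finset

/-- The `r`-expansion `G^r` of a graph `G`. -/
def expansion {α : Type*} [Fintype α] [DecidableEq α] (G : SimpleGraph α)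
    [DecidableRel G.Adj] (r : ℕ) : Finset (Finset (α ⊕ (Sym2 α × Fin (r - 2)))) :=
  (Finset.univ.filter fun p : α × α => G.Adj p.1 p.2).image fun p =>
    insert (Sum.inl p.1) (insert (Sum.inl p.2)
      (Finset.univ.image fun i : Fin (r - 2) => Sum.inr (s(p.1, p.2), i)))

/-- `W` is an independent set of the graph `G`. -/
def GIndep {α : Type*} (G : SimpleGraph α) (W : Finset α) : Prop :=
  ∀ u ∈ W, ∀ v ∈ W, ¬ G.Adj u v

/-- The edges of `G` not incident to the vertex set `W`. -/
def edgesAvoiding {α : Type*} [Fintype α] [DecidableEq α] (G : SimpleGraph α)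
    [DecidableRel G.Adj] (W : Finset α) : Finset (Sym2 α) :=
  G.edgeFinset.filter fun e => ∀ w ∈ W, w ∉ e

/-- Let `W` be an independent set of `G`, `Z` the edges of `G` not incident to `W`, and
`m = |W| + |Z|`, where `m - 1 < m(G) = min |W'| + |Z'|`.  Then the `r`-graph `𝒢₁` on
`A ∪ C`, `|A| = m - 1`, `|C| = n - m + 1`, whose hyperedges are all `r`-sets with exactly
one vertex in `A` (hence `r-1` in `C`), contains no copy of the expansion `G^r`. -/
theorem stmt_17 {α : Type*} [Fintype α] [DecidableEq α] (G : SimpleGraph α)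
    [DecidableRel G.Adj] (r n m : ℕ) (W : Finset α) (hW : GIndep G W)
    (hm : m = W.card + (edgesAvoiding G W).card)
    (hmin : ∀ W' : Finset α, GIndep G W' →
      m - 1 < W'.card + (edgesAvoiding G W').card) :
    ¬ ContainsCopy (expansion G r)
      ((Finset.univ.powersetCard r).filter
        (fun e : Finset (Fin (m - 1) ⊕ Fin (n - m + 1)) =>
          (e.filter fun v => v.isLeft = true).card = 1)) := by
  classical
  rintro ⟨f, hinj, hmap⟩
  -- key fact: for any adjacent pair, the image edge has exactly one "left" vertex
  have hcard : ∀ u v : α, G.Adj u v →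
      (((insert (Sum.inl u) (insert (Sum.inl v)
        (Finset.univ.image fun i : Fin (r - 2) => Sum.inr (s(u, v), i)))).image f).filter
        (fun x => x.isLeft = true)).card = 1 := by
    intro u v h
    have hmem : (insert (Sum.inl u) (insert (Sum.inl v)
        (Finset.univ.image fun i : Fin (r - 2) => Sum.inr (s(u, v), i)))) ∈ expansion G r := by
      refine Finset.mem_image.mpr ⟨(u, v), Finset.mem_filter.mpr ⟨Finset.mem_univ _, h⟩, rfl⟩
    have := hmap _ hmem
    exact (Finset.mem_filter.mp this).2
  set W' : Finset α := Finset.univ.filter (fun v => (f (Sum.inl v)).isLeft = true) with hW'def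
  -- W' is independent
  have hW' : GIndep G W' := by
    intro u hu v hv hadj
    have h1 := hcard u v hadj
    have hsub : ({f (Sum.inl u), f (Sum.inl v)} : Finset _) ⊆
        (((insert (Sum.inl u) (insert (Sum.inl v)
          (Finset.univ.image fun i : Fin (r - 2) => Sum.inr (s(u, v), i)))).image f).filter
          (fun x => x.isLeft = true)) := by
      intro x hx
      rcases Finset.mem_insert.mp hx with rfl | hx
      · exact Finset.mem_filter.mpr ⟨Finset.mem_image_of_mem f (Finset.mem_insert_self _ _),
          (Finset.mem_filter.mp hu).2⟩
      · rcases Finset.mem_singleton.mp hx with rfl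
        exact Finset.mem_filter.mpr ⟨Finset.mem_image_of_mem f
          (Finset.mem_insert.mpr (Or.inr (Finset.mem_insert_self _ _))),
          (Finset.mem_filter.mp hv).2⟩
    have hne : f (Sum.inl u) ≠ f (Sum.inl v) := fun h =>
      hadj.ne (Sum.inl.inj (hinj h))
    have h2 : ({f (Sum.inl u), f (Sum.inl v)} : Finset _).card = 2 :=
      Finset.card_pair hne
    have := Finset.card_le_card hsub
    omega
  set Z' : Finset (Sym2 α) := edgesAvoiding G W' with hZ'def
  -- each edge avoiding W' has some expansion vertex mapped to the left part
  have hZ : ∀ e ∈ Z', ∃ i : Fin (r - 2), (f (Sum.inr (e, i))).isLeft = true := by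
    intro e he
    induction e using Sym2.ind with
    | _ u v =>
      have he' := Finset.mem_filter.mp he
      have hadj : G.Adj u v := SimpleGraph.mem_edgeFinset.mp he'.1
      have hu : u ∉ W' := fun h => he'.2 u h (Sym2.mem_mk_left u v)
      have hv : v ∉ W' := fun h => he'.2 v h (Sym2.mem_mk_right u v)
      have hu' : ¬ (f (Sum.inl u)).isLeft = true := fun h =>
        hu (Finset.mem_filter.mpr ⟨Finset.mem_univ _, h⟩)
      have hv' : ¬ (f (Sum.inl v)).isLeft = true := fun h =>
        hv (Finset.mem_filter.mpr ⟨Finset.mem_univ _, h⟩)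
      have h1 := hcard u v hadj
      have hne : (((insert (Sum.inl u) (insert (Sum.inl v)
          (Finset.univ.image fun i : Fin (r - 2) => Sum.inr (s(u, v), i)))).image f).filter
          (fun x => x.isLeft = true)).Nonempty := by
        rw [← Finset.card_pos, h1]; norm_num
      obtain ⟨x, hx⟩ := hne
      obtain ⟨hx1, hx2⟩ := Finset.mem_filter.mp hx
      obtain ⟨y, hy, rfl⟩ := Finset.mem_image.mp hx1
      rcases Finset.mem_insert.mp hy with rfl | hy
      · exact absurd hx2 hu'
      rcases Finset.mem_insert.mp hy with rfl | hy
      · exact absurd hx2 hv'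
      obtain ⟨i, _, rfl⟩ := Finset.mem_image.mp hy
      exact ⟨i, hx2⟩
  -- build an injection from W' ⊕ Z' into the left part
  let g : α ⊕ Sym2 α → Fin (m - 1) ⊕ Fin (n - m + 1) := fun x =>
    match x with
    | Sum.inl w => f (Sum.inl w)
    | Sum.inr e =>
        if h : ∃ i : Fin (r - 2), (f (Sum.inr (e, i))).isLeft = true then
          f (Sum.inr (e, h.choose))
        else Sum.inr ⟨0, Nat.succ_pos _⟩
  have hmaps : ∀ x ∈ W'.disjSum Z', g x ∈
      (Finset.univ.filter fun x : Fin (m - 1) ⊕ Fin (n - m + 1) => x.isLeft = true) := by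
    intro x hx
    rcases Finset.mem_disjSum.mp hx with ⟨w, hw, rfl⟩ | ⟨e, he, rfl⟩
    · exact Finset.mem_filter.mpr ⟨Finset.mem_univ _, (Finset.mem_filter.mp hw).2⟩
    · have h : ∃ i : Fin (r - 2), (f (Sum.inr (e, i))).isLeft = true := hZ e he
      refine Finset.mem_filter.mpr ⟨Finset.mem_univ _, ?_⟩
      simp only [g, dif_pos h]
      exact h.choose_spec
  have hginj : Set.InjOn g (W'.disjSum Z') := by
    intro x hx y hy hxy
    rcases Finset.mem_disjSum.mp hx with ⟨w, hw, rfl⟩ | ⟨e, he, rfl⟩ <;>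
      rcases Finset.mem_disjSum.mp hy with ⟨w', hw', rfl⟩ | ⟨e', he', rfl⟩
    · simp only [g] at hxy
      exact congrArg Sum.inl (Sum.inl.inj (hinj hxy))
    · exfalso
      have h' : ∃ i : Fin (r - 2), (f (Sum.inr (e', i))).isLeft = true := hZ e' he'
      simp only [g, dif_pos h'] at hxy
      exact absurd (hinj hxy) (by simp)
    · exfalso
      have h' : ∃ i : Fin (r - 2), (f (Sum.inr (e, i))).isLeft = true := hZ e he
      simp only [g, dif_pos h'] at hxy
      exact absurd (hinj hxy) (by simp)
    · have h1 : ∃ i : Fin (r - 2), (f (Sum.inr (e, i))).isLeft = true := hZ e he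
      have h2 : ∃ i : Fin (r - 2), (f (Sum.inr (e', i))).isLeft = true := hZ e' he'
      simp only [g, dif_pos h1, dif_pos h2] at hxy
      have := hinj hxy
      have : (e, h1.choose) = (e', h2.choose) := by
        exact Sum.inr.inj this
      exact congrArg Sum.inr (congrArg Prod.fst this)
  have hcount := Finset.card_le_card_of_injOn g hmaps hginj
  have htarget : (Finset.univ.filter fun x : Fin (m - 1) ⊕ Fin (n - m + 1) =>
      x.isLeft = true) = Finset.univ.image Sum.inl := by
    ext x
    cases x <;> simp
  rw [Finset.card_disjSum, htarget,
    Finset.card_image_of_injective _ Sum.inl_injective, Finset.card_univ,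
    Fintype.card_fin] at hcount
  have hmin' := hmin W' hW'
  rw [← hZ'def] at hmin'
  omega
end
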